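/- arXiv:2208.01691 — 3 statements merged into one kernel-verified Lean document; each statement's English description precedes it below -/
import Mathlib

section
/- Let Y, w, w* be square-integrable random variables with E[w] = E[w*], cov(w* − w, w) = 0, var(w) > 0, var(w*) > 0, var(Y) > 0, and define R² := 1 − var(w)/var(w*) with R² < 1. Then |cov(w − w*, Y)| ≤ √(1 − cor(w,Y)²) · √((R²/(1−R²)) · var(Y) · var(w)). -/
/-
Write `d = w* − w`. The hypothesis `cov(w* − w, w) = 0` makes `d` uncorrelated with `w`, so
`var d = var w* − var w`, which is exactly `(R²/(1 − R²)) · var w`. Regressing `Y` on `w` leaves a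
residual of variance `(1 − cor(w, Y)²) · var Y` whose covariance with `d` is still `cov(d, Y)`, and
the Cauchy–Schwarz inequality for `d` and this residual is the claimed bound.
-/

open MeasureTheory ProbabilityTheory Filter Real

noncomputable def covar {Ω : Type*} [MeasurableSpace Ω] (μ : MeasureTheory.Measure Ω)
    (X Y : Ω → ℝ) : ℝ :=
  ∫ ω, (X ω - ∫ ω', X ω' ∂μ) * (Y ω - ∫ ω', Y ω' ∂μ) ∂μ

noncomputable def pvar {Ω : Type*} [MeasurableSpace Ω] (μ : MeasureTheory.Measure Ω)
    (X : Ω → ℝ) : ℝ :=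
  covar μ X X

noncomputable def pcor {Ω : Type*} [MeasurableSpace Ω] (μ : MeasureTheory.Measure Ω)
    (X Y : Ω → ℝ) : ℝ :=
  covar μ X Y / (Real.sqrt (pvar μ X) * Real.sqrt (pvar μ Y))

namespace ProbabilityTheory

variable {Ω : Type*} [MeasurableSpace Ω] {μ : Measure Ω} {X Y W : Ω → ℝ}

lemma covar_eq_covariance (μ : Measure Ω) (X Y : Ω → ℝ) : covar μ X Y = cov[X, Y; μ] := rfl

lemma pvar_eq_variance (hX : AEMeasurable X μ) : pvar μ X = Var[X; μ] := covariance_self hX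

lemma pcor_sq (hX : AEMeasurable X μ) (hY : AEMeasurable Y μ) :
    pcor μ X Y ^ 2 = cov[X, Y; μ] ^ 2 / (Var[X; μ] * Var[Y; μ]) := by
  rw [pcor, div_pow, mul_pow, pvar_eq_variance hX, pvar_eq_variance hY,
    sq_sqrt (variance_nonneg X μ), sq_sqrt (variance_nonneg Y μ), covar_eq_covariance]

variable [IsFiniteMeasure μ]

lemma sq_covariance_le_variance_mul_variance (hX : MemLp X 2 μ) (hY : MemLp Y 2 μ) :
    cov[X, Y; μ] ^ 2 ≤ Var[X; μ] * Var[Y; μ] := by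
  have hquad (t : ℝ) : 0 ≤ Var[X; μ] * (t * t) + 2 * cov[X, Y; μ] * t + Var[Y; μ] := by
    have := variance_nonneg (t • X + Y) μ
    rw [variance_add (hX.const_smul t) hY, variance_smul, covariance_smul_left] at this
    linarith
  have := discrim_le_zero hquad
  rw [discrim] at this
  linarith

/-- Regressing `Y` on `W` does not change its covariance with `X`, and leaves a residual of
variance `Var[Y] - cov[W, Y]² / Var[W]`. -/
lemma sq_covariance_le_of_covariance_eq_zero (hX : MemLp X 2 μ) (hY : MemLp Y 2 μ)
    (hW : MemLp W 2 μ) (hXW : cov[X, W; μ] = 0) :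
    cov[X, Y; μ] ^ 2 ≤ Var[X; μ] * (Var[Y; μ] - cov[W, Y; μ] ^ 2 / Var[W; μ]) := by
  set β := cov[W, Y; μ] / Var[W; μ]
  have hcov : cov[X, Y - β • W; μ] = cov[X, Y; μ] := by
    rw [covariance_sub_right hX hY (hW.const_smul β), covariance_smul_right, hXW, mul_zero,
      sub_zero]
  have hvar : Var[Y - β • W; μ] = Var[Y; μ] - cov[W, Y; μ] ^ 2 / Var[W; μ] := by
    rw [variance_sub hY (hW.const_smul β), variance_smul, covariance_smul_right,
      covariance_comm Y W]
    rcases eq_or_ne Var[W; μ] 0 with h | h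
    · simp [β, h]
    · simp only [β]
      field_simp
      ring
  rw [← hcov, ← hvar]
  exact sq_covariance_le_variance_mul_variance hX (hY.sub (hW.const_smul β))

end ProbabilityTheory

theorem stmt3_general {Ω : Type*} [MeasurableSpace Ω] (μ : MeasureTheory.Measure Ω)
    [IsProbabilityMeasure μ] (Y w wstar : Ω → ℝ)
    (hY : MemLp Y 2 μ) (hw : MemLp w 2 μ) (hwstar : MemLp wstar 2 μ)
    (horth : covar μ (fun ω => wstar ω - w ω) w = 0)
    (hvw : 0 < pvar μ w) (hvwstar : 0 < pvar μ wstar) (hvY : 0 < pvar μ Y)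
    (R2 : ℝ) (hR2 : R2 = 1 - pvar μ w / pvar μ wstar) :
    |covar μ (fun ω => w ω - wstar ω) Y|
      ≤ Real.sqrt (1 - (pcor μ w Y) ^ 2)
          * Real.sqrt ((R2 / (1 - R2)) * pvar μ Y * pvar μ w) := by
  have hd : MemLp (wstar - w) 2 μ := hwstar.sub hw
  have hdw : cov[wstar - w, w; μ] = 0 := horth
  have hbias : covar μ (fun ω => w ω - wstar ω) Y = -cov[wstar - w, Y; μ] := by
    rw [covar_eq_covariance, covariance_fun_sub_left hw hwstar hY,
      covariance_sub_left hwstar hw hY]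
    ring
  have hvd : Var[wstar - w; μ] = Var[wstar; μ] - Var[w; μ] := by
    have := variance_add hd hw
    rw [sub_add_cancel, hdw] at this
    linarith
  rw [pvar_eq_variance hw.aemeasurable] at hvw hR2 ⊢
  rw [pvar_eq_variance hwstar.aemeasurable] at hvwstar hR2
  rw [pvar_eq_variance hY.aemeasurable] at hvY ⊢
  have hodds : R2 / (1 - R2) * Var[Y; μ] * Var[w; μ] = Var[wstar - w; μ] * Var[Y; μ] := by
    rw [hR2, hvd]
    field_simp [hvw.ne', hvwstar.ne']
    ring
  rw [hbias, abs_neg, hodds, ← sqrt_mul' _ (mul_nonneg (variance_nonneg _ μ) hvY.le),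
    pcor_sq hw.aemeasurable hY.aemeasurable]
  refine abs_le_sqrt ?_
  calc cov[wstar - w, Y; μ] ^ 2
      ≤ Var[wstar - w; μ] * (Var[Y; μ] - cov[w, Y; μ] ^ 2 / Var[w; μ]) :=
        sq_covariance_le_of_covariance_eq_zero hd hY hw hdw
    _ = _ := by field_simp

theorem stmt3 {Ω : Type*} [MeasurableSpace Ω] (μ : MeasureTheory.Measure Ω)
    [IsProbabilityMeasure μ] (Y w wstar : Ω → ℝ)
    (hY : MemLp Y 2 μ) (hw : MemLp w 2 μ) (hwstar : MemLp wstar 2 μ)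
    (hmean : ∫ ω, w ω ∂μ = ∫ ω, wstar ω ∂μ)
    (horth : covar μ (fun ω => wstar ω - w ω) w = 0)
    (hvw : 0 < pvar μ w) (hvwstar : 0 < pvar μ wstar) (hvY : 0 < pvar μ Y)
    (R2 : ℝ) (hR2 : R2 = 1 - pvar μ w / pvar μ wstar) (hR2lt : R2 < 1) :
    |covar μ (fun ω => w ω - wstar ω) Y|
      ≤ Real.sqrt (1 - (pcor μ w Y) ^ 2)
          * Real.sqrt ((R2 / (1 - R2)) * pvar μ Y * pvar μ w) :=
  stmt3_general μ Y w wstar hY hw hwstar horth hvw hvwstar hvY R2 hR2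
end

section
/- Let w, w* be square-integrable random variables with E[w] = E[w*] = 1, var(w) > 0, and suppose w > 0 almost surely. Define λ := w*/w and R² := 1 − var(w)/var(w*), and assume cov(w* − w, w) = 0 and R² < 1. Then cov(λ², w²)/E[w²] + E[λ²] = (1/(1−R²))·(1 − R²/E[w²]). -/
open MeasureTheory ProbabilityTheory Filter Real

/-! Since `λ² w² = w*²`, the left-hand side collapses to `E[w*²] / E[w²] = (1 + var w*) / (1 + var w)`,
and `1 - R² = var w / var w*` turns the right-hand side into the same ratio. -/

section

variable {Ω : Type*} [MeasurableSpace Ω] {μ : Measure Ω}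

lemma pvar_nonneg (X : Ω → ℝ) : 0 ≤ pvar μ X :=
  integral_nonneg fun _ ↦ mul_self_nonneg _

variable [IsProbabilityMeasure μ] {X Y : Ω → ℝ}

lemma covar_eq_integral_mul_sub (hX : Integrable X μ) (hY : Integrable Y μ)
    (hXY : Integrable (fun ω ↦ X ω * Y ω) μ) :
    covar μ X Y = ∫ ω, X ω * Y ω ∂μ - (∫ ω, X ω ∂μ) * ∫ ω, Y ω ∂μ := by
  set a := ∫ ω, X ω ∂μ
  set b := ∫ ω, Y ω ∂μ
  have hlin : Integrable (fun ω ↦ a * Y ω + b * X ω) μ := (hY.const_mul a).add (hX.const_mul b)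
  have hlin' : Integrable (fun ω ↦ a * Y ω + b * X ω - a * b) μ := hlin.sub (integrable_const _)
  have hexpand : ∀ ω, (X ω - a) * (Y ω - b) = X ω * Y ω - (a * Y ω + b * X ω - a * b) :=
    fun ω ↦ by ring
  rw [covar, funext hexpand, integral_sub hXY hlin',
    integral_sub hlin (integrable_const _), integral_add (hY.const_mul a) (hX.const_mul b),
    integral_const_mul, integral_const_mul, integral_const]
  simp only [probReal_univ, smul_eq_mul, one_mul]
  ring

lemma pvar_eq_integral_sq_sub (hX : MemLp X 2 μ) :
    pvar μ X = ∫ ω, X ω ^ 2 ∂μ - (∫ ω, X ω ∂μ) ^ 2 := by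
  have hX2 := hX.integrable_sq
  simp only [sq] at hX2 ⊢
  exact covar_eq_integral_mul_sub (hX.integrable one_le_two) (hX.integrable one_le_two) hX2

lemma covar_div_integral_add_integral (hX : Integrable X μ) (hY : Integrable Y μ)
    (hXY : Integrable (fun ω ↦ X ω * Y ω) μ) (hY0 : ∫ ω, Y ω ∂μ ≠ 0) :
    covar μ X Y / ∫ ω, Y ω ∂μ + ∫ ω, X ω ∂μ = (∫ ω, X ω * Y ω ∂μ) / ∫ ω, Y ω ∂μ := by
  rw [covar_eq_integral_mul_sub hX hY hXY]
  field_simp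
  ring

end

theorem stmt5_general {Ω : Type*} [MeasurableSpace Ω] (μ : MeasureTheory.Measure Ω)
    [IsProbabilityMeasure μ] (w wstar : Ω → ℝ)
    (hw : MemLp w 2 μ) (hwstar : MemLp wstar 2 μ)
    (hwpos : ∀ᵐ ω ∂μ, 0 < w ω)
    (hmeanw : ∫ ω, w ω ∂μ = 1) (hmeanwstar : ∫ ω, wstar ω ∂μ = 1)
    (lam : Ω → ℝ) (hlam : ∀ ω, lam ω = wstar ω / w ω)
    (hlamInt : MeasureTheory.Integrable (fun ω => (lam ω) ^ 2) μ)
    (R2 : ℝ) (hR2 : R2 = 1 - pvar μ w / pvar μ wstar) (hR2lt : R2 < 1) :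
    covar μ (fun ω => (lam ω) ^ 2) (fun ω => (w ω) ^ 2) / (∫ ω, (w ω) ^ 2 ∂μ)
        + (∫ ω, (lam ω) ^ 2 ∂μ)
      = (1 / (1 - R2)) * (1 - R2 / (∫ ω, (w ω) ^ 2 ∂μ)) := by
  have hlam_w : (fun ω ↦ lam ω ^ 2 * w ω ^ 2) =ᵐ[μ] fun ω ↦ wstar ω ^ 2 := by
    filter_upwards [hwpos] with ω hω
    rw [hlam ω]
    field_simp
  have hw2 : ∫ ω, w ω ^ 2 ∂μ = pvar μ w + 1 := by
    rw [pvar_eq_integral_sq_sub hw, hmeanw]; ring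
  have hwstar2 : ∫ ω, wstar ω ^ 2 ∂μ = pvar μ wstar + 1 := by
    rw [pvar_eq_integral_sq_sub hwstar, hmeanwstar]; ring
  set a := pvar μ w
  set b := pvar μ wstar
  have hratio : 0 < a / b := by linarith
  have ha : a ≠ 0 := fun h ↦ by simp [h] at hratio
  have hb : b ≠ 0 := fun h ↦ by simp [h] at hratio
  have ha1 : a + 1 ≠ 0 := by linarith [pvar_nonneg (μ := μ) w]
  rw [covar_div_integral_add_integral hlamInt hw.integrable_sq
      (hwstar.integrable_sq.congr hlam_w.symm) (hw2 ▸ ha1),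
    integral_congr_ae hlam_w, hw2, hwstar2, hR2, sub_sub_cancel]
  field_simp
  ring

theorem stmt5 {Ω : Type*} [MeasurableSpace Ω] (μ : MeasureTheory.Measure Ω)
    [IsProbabilityMeasure μ] (w wstar : Ω → ℝ)
    (hw : MemLp w 2 μ) (hwstar : MemLp wstar 2 μ)
    (hwpos : ∀ᵐ ω ∂μ, 0 < w ω)
    (hmeanw : ∫ ω, w ω ∂μ = 1) (hmeanwstar : ∫ ω, wstar ω ∂μ = 1)
    (hvw : 0 < pvar μ w)
    (lam : Ω → ℝ) (hlam : ∀ ω, lam ω = wstar ω / w ω)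
    (hlamInt : MeasureTheory.Integrable (fun ω => (lam ω) ^ 2) μ)
    (horth : covar μ (fun ω => wstar ω - w ω) w = 0)
    (R2 : ℝ) (hR2 : R2 = 1 - pvar μ w / pvar μ wstar) (hR2lt : R2 < 1) :
    covar μ (fun ω => (lam ω) ^ 2) (fun ω => (w ω) ^ 2) / (∫ ω, (w ω) ^ 2 ∂μ)
        + (∫ ω, (lam ω) ^ 2 ∂μ)
      = (1 / (1 - R2)) * (1 - R2 / (∫ ω, (w ω) ^ 2 ∂μ)) :=
  stmt5_general μ w wstar hw hwstar hwpos hmeanw hmeanwstar lam hlam hlamInt R2 hR2 hR2lt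
end

section
/- Let Y, w, w* be square-integrable with E[w]=E[w*], cov(w−w*, w)=0, var(w)>0, var(w*)>0, var(Y)>0, and R² := 1 − var(w)/var(w*) ∈ (0,1). Then cor(w − w*, Y) = cor(w, Y)·√((1−R²)/R²) − cor(w*, Y)·√(1/R²). -/
open MeasureTheory ProbabilityTheory Filter Real

/-!
Covariance is bilinear, so `cov(w - w*, w) = 0` is the Pythagorean relation
`var w* = var w + var (w - w*)`, i.e. `var (w - w*) = R² var w*`. Hence
`(1 - R²)/R² = var w / var (w - w*)` and `1/R² = var w* / var (w - w*)`, and multiplying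
`cor(w, Y)` and `cor(w*, Y)` by the square roots of these ratios rescales both to the
normalisation of `cor(w - w*, Y)`; the claim is then `cov(w - w*, Y) = cov(w, Y) - cov(w*, Y)`.
-/

section Covariance

variable {Ω : Type*} [MeasurableSpace Ω] {μ : Measure Ω}

lemma covar_comm (X Y : Ω → ℝ) : covar μ X Y = covar μ Y X := by
  simp only [covar, mul_comm]

lemma covar_sub_left [IsFiniteMeasure μ] {X X' Y : Ω → ℝ}
    (hX : MemLp X 2 μ) (hX' : MemLp X' 2 μ) (hY : MemLp Y 2 μ) :
    covar μ (fun ω => X ω - X' ω) Y = covar μ X Y - covar μ X' Y := by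
  have hYc : MemLp (fun ω => Y ω - ∫ ω', Y ω' ∂μ) 2 μ := hY.sub (memLp_const _)
  have hint : ∀ {Z : Ω → ℝ}, MemLp Z 2 μ →
      Integrable (fun ω => (Z ω - ∫ ω', Z ω' ∂μ) * (Y ω - ∫ ω', Y ω' ∂μ)) μ :=
    fun hZ => (hZ.sub (memLp_const _)).integrable_mul hYc
  simp only [covar]
  rw [integral_sub (hX.integrable one_le_two) (hX'.integrable one_le_two),
    ← integral_sub (hint hX) (hint hX')]
  congr 1 with ω
  ring

lemma pvar_eq_pvar_add_pvar_sub_of_covar_eq_zero [IsFiniteMeasure μ] {X X' : Ω → ℝ}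
    (hX : MemLp X 2 μ) (hX' : MemLp X' 2 μ)
    (horth : covar μ (fun ω => X ω - X' ω) X = 0) :
    pvar μ X' = pvar μ X + pvar μ (fun ω => X ω - X' ω) := by
  have hD : MemLp (fun ω => X ω - X' ω) 2 μ := hX.sub hX'
  rw [covar_sub_left hX hX' hX] at horth
  have hDD := covar_sub_left hX hX' hD
  rw [covar_comm X, covar_comm X', covar_sub_left hX hX' hX,
    covar_sub_left hX hX' hX'] at hDD
  simp only [pvar] at horth hDD ⊢
  rw [hDD, covar_comm X X']
  linarith

lemma pcor_mul_sqrt_div {X : Ω → ℝ} (hX : 0 < pvar μ X) (Y : Ω → ℝ) (v : ℝ) :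
    pcor μ X Y * √(pvar μ X / v) = covar μ X Y / (√v * √(pvar μ Y)) := by
  have hsX : √(pvar μ X) ≠ 0 := (sqrt_pos.mpr hX).ne'
  rw [pcor, sqrt_div hX.le, div_mul_div_comm, mul_comm (covar μ X Y), mul_assoc,
    mul_div_mul_left _ _ hsX, mul_comm (√(pvar μ Y))]

end Covariance

theorem stmt16_general {Ω : Type*} [MeasurableSpace Ω] (μ : MeasureTheory.Measure Ω)
    [IsProbabilityMeasure μ] (Y w wstar : Ω → ℝ)
    (hY : MemLp Y 2 μ) (hw : MemLp w 2 μ) (hwstar : MemLp wstar 2 μ)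
    (horth : covar μ (fun ω => w ω - wstar ω) w = 0)
    (R2 : ℝ) (hR2 : R2 = 1 - pvar μ w / pvar μ wstar)
    (hR2mem : R2 ∈ Set.Ioo (0 : ℝ) 1) :
    pcor μ (fun ω => w ω - wstar ω) Y
      = pcor μ w Y * Real.sqrt ((1 - R2) / R2)
        - pcor μ wstar Y * Real.sqrt (1 / R2) := by
  obtain ⟨hR2pos, hR2lt⟩ := hR2mem
  have hpyth := pvar_eq_pvar_add_pvar_sub_of_covar_eq_zero hw hwstar horth
  have hratio : 0 < pvar μ w / pvar μ wstar := by linarith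
  have hvw : 0 < pvar μ w := by
    rcases div_pos_iff.mp hratio with h | h
    exacts [h.1, absurd h.1 (pvar_nonneg w).not_gt]
  have hvwstar : 0 < pvar μ wstar := by
    linarith [pvar_nonneg (μ := μ) (fun ω => w ω - wstar ω)]
  have hvD : pvar μ (fun ω => w ω - wstar ω) = R2 * pvar μ wstar := by
    rw [hR2]; field_simp; linarith
  have e1 : (1 - R2) / R2 = pvar μ w / pvar μ (fun ω => w ω - wstar ω) := by
    rw [hvD, hR2]; field_simp; ring
  have e2 : 1 / R2 = pvar μ wstar / pvar μ (fun ω => w ω - wstar ω) := by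
    rw [hvD]; field_simp
  rw [e1, e2, pcor_mul_sqrt_div hvw, pcor_mul_sqrt_div hvwstar, ← sub_div,
    ← covar_sub_left hw hwstar hY, pcor]

theorem stmt16 {Ω : Type*} [MeasurableSpace Ω] (μ : MeasureTheory.Measure Ω)
    [IsProbabilityMeasure μ] (Y w wstar : Ω → ℝ)
    (hY : MemLp Y 2 μ) (hw : MemLp w 2 μ) (hwstar : MemLp wstar 2 μ)
    (hmean : ∫ ω, w ω ∂μ = ∫ ω, wstar ω ∂μ)
    (horth : covar μ (fun ω => w ω - wstar ω) w = 0)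
    (hvw : 0 < pvar μ w) (hvwstar : 0 < pvar μ wstar) (hvY : 0 < pvar μ Y)
    (R2 : ℝ) (hR2 : R2 = 1 - pvar μ w / pvar μ wstar)
    (hR2mem : R2 ∈ Set.Ioo (0 : ℝ) 1) :
    pcor μ (fun ω => w ω - wstar ω) Y
      = pcor μ w Y * Real.sqrt ((1 - R2) / R2)
        - pcor μ wstar Y * Real.sqrt (1 / R2) :=
  stmt16_general μ Y w wstar hY hw hwstar horth R2 hR2 hR2mem
end
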